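/- arXiv:2207.12633 — 3 statements merged into one kernel-verified Lean document; each statement's English description precedes it below -/
import Mathlib

section
/- Let K be a field complete with respect to a nonarchimedean absolute value ‖·‖, and let q ∈ K satisfy 0 < ‖q‖ < 1. Let Γ(t) = 1 + Σ_{n≥1} a_n t^n be an entire power series over K. Then: (1) for every n ≥ 0, the n-th coefficient of the partial product P_N(t) = ∏_{i=0}^{N−1} Γ(q^i t) converges in K as N → ∞, defining a power series Δ(t) = 1 + Σ_{n≥1} b_n t^n (denoted δ^{−1}(Γ)); (2) Δ is entire; and (3) Δ(t) = Γ(t) · Δ(qt) as power series, i.e. δ(Δ) = Γ where δ(Δ)(t) = Δ(t)/Δ(qt). -/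
open Filter PowerSeries

/-- A power series `Γ ∈ K⟦t⟧` is entire if its coefficients tend to zero faster than
any geometric sequence: for every `r > 0`, `‖a_n‖ r^n → 0`. -/
def IsEntirePowerSeries {K : Type*} [NormedField K] (f : PowerSeries K) : Prop :=
  ∀ r : ℝ, 0 < r →
    Tendsto (fun n : ℕ => ‖PowerSeries.coeff n f‖ * r ^ n) atTop (nhds 0)

/-!
Comparing coefficients in `Δ(t) = Γ(t) Δ(qt)` gives `(1 - q^n) b_n = ∑_{k<n} a_{n-k} q^k b_k`,
and `‖1 - q^n‖ = 1` by the ultrametric inequality, so `Δ = δ⁻¹(Γ)` is determined recursively.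
The same recursion bounds `sup ‖b_n‖ ρ^n` by `sup ‖a_m‖ ρ^m · sup ‖b_k‖ (‖q‖ ρ)^k`; starting
from a small radius where all weighted coefficients are `≤ 1`, boundedness spreads to every
radius `ρ / ‖q‖^j`, so `Δ` is entire. Iterating the functional equation gives
`Δ(t) = P_N(t) Δ(q^N t)`; as `P_N` and `Δ` have weighted coefficients `≤ 1` at one fixed small
radius, the `n`-th coefficients of `P_N` and `Δ` differ by `O(‖q‖^N)`.
-/

section Recursion

variable {K : Type*} [Field K] (q : K) (Γ : K⟦X⟧)

/-- Coefficients of `δ⁻¹(Γ)`, solved from `Δ(t) = Γ(t) Δ(qt)` by comparing coefficients. -/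
noncomputable def deltaInvCoeff : ℕ → K
  | 0 => 1
  | n + 1 => (1 - q ^ (n + 1))⁻¹ *
      ∑ k : Fin (n + 1), coeff (n + 1 - k) Γ * q ^ (k : ℕ) * deltaInvCoeff k

noncomputable def deltaInv : K⟦X⟧ := mk (deltaInvCoeff q Γ)

@[simp]
lemma coeff_deltaInv_zero : coeff 0 (deltaInv q Γ) = 1 := by
  simp [deltaInv, deltaInvCoeff]

lemma coeff_deltaInv_succ (n : ℕ) :
    coeff (n + 1) (deltaInv q Γ) = (1 - q ^ (n + 1))⁻¹ *
      ∑ k ∈ Finset.range (n + 1), coeff (n + 1 - k) Γ * q ^ k * coeff k (deltaInv q Γ) := by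
  simp only [deltaInv, coeff_mk]
  rw [deltaInvCoeff, Fin.sum_univ_eq_sum_range
    (fun k => coeff (n + 1 - k) Γ * q ^ k * deltaInvCoeff q Γ k)]

lemma one_sub_pow_mul_coeff_deltaInv_succ {n : ℕ} (hq : q ^ (n + 1) ≠ 1) :
    (1 - q ^ (n + 1)) * coeff (n + 1) (deltaInv q Γ) =
      ∑ k ∈ Finset.range (n + 1), coeff (n + 1 - k) Γ * q ^ k * coeff k (deltaInv q Γ) := by
  rw [coeff_deltaInv_succ, mul_inv_cancel_left₀ (sub_ne_zero.mpr hq.symm)]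

theorem deltaInv_eq_mul_rescale (hq : ∀ n : ℕ, q ^ (n + 1) ≠ 1) (hΓ0 : coeff 0 Γ = 1) :
    deltaInv q Γ = Γ * rescale q (deltaInv q Γ) := by
  ext n
  rw [mul_comm, coeff_mul, Finset.Nat.sum_antidiagonal_eq_sum_range_succ_mk]
  cases n with
  | zero => simp [hΓ0]
  | succ n =>
    simp only [Finset.sum_range_succ _ (n + 1), coeff_rescale, Nat.sub_self, hΓ0, mul_one]
    have hsum : ∑ k ∈ Finset.range (n + 1), q ^ k * coeff k (deltaInv q Γ) * coeff (n + 1 - k) Γ =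
        ∑ k ∈ Finset.range (n + 1), coeff (n + 1 - k) Γ * q ^ k * coeff k (deltaInv q Γ) :=
      Finset.sum_congr rfl fun k _ => by ring
    linear_combination one_sub_pow_mul_coeff_deltaInv_succ q Γ (hq n) - hsum

end Recursion

lemma eq_prod_rescale_mul_rescale_pow {R : Type*} [CommRing R] {q : R} {Γ Δ : R⟦X⟧}
    (h : Δ = Γ * rescale q Δ) (N : ℕ) :
    Δ = (∏ i ∈ Finset.range N, rescale (q ^ i) Γ) * rescale (q ^ N) Δ := by
  induction N with
  | zero => simp
  | succ N ih =>
    conv_lhs => rw [ih, h]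
    rw [map_mul, rescale_rescale, ← pow_succ', Finset.prod_range_succ, mul_assoc]

section NormedField

variable {K : Type*} [NormedField K]

lemma bddAbove_norm_coeff_mul_pow_of_le {f : K⟦X⟧} {r r' : ℝ}
    (h : BddAbove (Set.range fun n => ‖coeff n f‖ * r' ^ n)) (hr : 0 ≤ r) (hrr' : r ≤ r') :
    BddAbove (Set.range fun n => ‖coeff n f‖ * r ^ n) := by
  obtain ⟨C, hC⟩ := h
  exact ⟨C, Set.forall_mem_range.mpr fun n => le_trans
    (mul_le_mul_of_nonneg_left (pow_le_pow_left₀ hr hrr' n) (norm_nonneg _)) (hC ⟨n, rfl⟩)⟩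

lemma IsEntirePowerSeries.bddAbove {f : K⟦X⟧} (hf : IsEntirePowerSeries f) {r : ℝ}
    (hr : 0 ≤ r) : BddAbove (Set.range fun n => ‖coeff n f‖ * r ^ n) :=
  bddAbove_norm_coeff_mul_pow_of_le (hf (r + 1) (by linarith)).bddAbove_range hr (by linarith)

lemma isEntirePowerSeries_of_bddAbove {f : K⟦X⟧}
    (h : ∀ r : ℝ, 0 < r → BddAbove (Set.range fun n => ‖coeff n f‖ * r ^ n)) :
    IsEntirePowerSeries f := by
  intro r hr
  obtain ⟨C, hC⟩ := h (2 * r) (by positivity)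
  refine squeeze_zero (fun n => by positivity) (g := fun n => C * (1 / 2) ^ n) (fun n => ?_) ?_
  · calc ‖coeff n f‖ * r ^ n = ‖coeff n f‖ * (2 * r) ^ n * (1 / 2) ^ n := by
          rw [mul_assoc, ← mul_pow]; field_simp
      _ ≤ C * (1 / 2) ^ n := by gcongr; exact hC ⟨n, rfl⟩
  · simpa using (tendsto_pow_atTop_nhds_zero_of_lt_one (r := (1 / 2 : ℝ)) (by norm_num)
      (by norm_num)).const_mul C

lemma exists_pos_forall_norm_coeff_mul_pow_le_one {f : K⟦X⟧} (hf : IsEntirePowerSeries f)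
    (hf0 : ‖coeff 0 f‖ ≤ 1) : ∃ s : ℝ, 0 < s ∧ ∀ n, ‖coeff n f‖ * s ^ n ≤ 1 := by
  obtain ⟨A, hA⟩ := (hf 1 one_pos).bddAbove_range
  have hA' : ∀ n, ‖coeff n f‖ ≤ max 1 A := fun n =>
    le_max_of_le_right (by simpa using hA ⟨n, rfl⟩)
  have hmax : 0 < max 1 A := lt_max_of_lt_left one_pos
  refine ⟨(max 1 A)⁻¹, inv_pos.mpr hmax, fun n => ?_⟩
  rcases n.eq_zero_or_pos with rfl | hn
  · simpa using hf0
  calc ‖coeff n f‖ * (max 1 A)⁻¹ ^ n ≤ max 1 A * (max 1 A)⁻¹ ^ 1 := by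
        refine mul_le_mul (hA' n) ?_ (by positivity) hmax.le
        exact pow_le_pow_of_le_one (by positivity) (inv_le_one_of_one_le₀ (le_max_left _ _)) hn
    _ = 1 := by rw [pow_one, mul_inv_cancel₀ hmax.ne']

lemma norm_pow_succ_lt_one {q : K} (hq : ‖q‖ < 1) (n : ℕ) : ‖q ^ (n + 1)‖ < 1 := by
  rw [norm_pow]; exact pow_lt_one₀ (norm_nonneg q) hq n.succ_ne_zero

lemma norm_coeff_rescale_le {c : K} (hc : ‖c‖ ≤ 1) (f : K⟦X⟧) (n : ℕ) :
    ‖coeff n (rescale c f)‖ ≤ ‖coeff n f‖ := by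
  rw [coeff_rescale, norm_mul, norm_pow]
  exact mul_le_of_le_one_left (norm_nonneg _) (pow_le_one₀ (norm_nonneg _) hc)

end NormedField

section Ultrametric

variable {K : Type*} [NormedField K] [IsUltrametricDist K]

lemma norm_one_sub_eq_one {x : K} (hx : ‖x‖ < 1) : ‖1 - x‖ = 1 := by
  rw [sub_eq_add_neg, IsUltrametricDist.norm_add_eq_max_of_norm_ne_norm (by simpa using hx.ne'),
    norm_one, norm_neg, max_eq_left hx.le]

lemma norm_coeff_mul_mul_pow_le_one {s : ℝ} (hs : 0 ≤ s) {f g : K⟦X⟧}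
    (hf : ∀ n, ‖coeff n f‖ * s ^ n ≤ 1) (hg : ∀ n, ‖coeff n g‖ * s ^ n ≤ 1) (n : ℕ) :
    ‖coeff n (f * g)‖ * s ^ n ≤ 1 := by
  obtain ⟨p, hp, hle⟩ := IsUltrametricDist.exists_norm_finsetSum_le_of_nonempty
    (⟨(0, n), by simp⟩ : (Finset.HasAntidiagonal.antidiagonal n).Nonempty)
    fun p : ℕ × ℕ => coeff p.1 f * coeff p.2 g
  rw [Finset.HasAntidiagonal.mem_antidiagonal] at hp
  calc ‖coeff n (f * g)‖ * s ^ n ≤ ‖coeff p.1 f * coeff p.2 g‖ * s ^ n := by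
        rw [coeff_mul]; gcongr
    _ = (‖coeff p.1 f‖ * s ^ p.1) * (‖coeff p.2 g‖ * s ^ p.2) := by
        rw [← hp, norm_mul, pow_add]; ring
    _ ≤ 1 := mul_le_one₀ (hf _) (by positivity) (hg _)

lemma norm_coeff_prod_mul_pow_le_one {ι : Type*} {s : ℝ} (hs : 0 ≤ s) (t : Finset ι)
    (F : ι → K⟦X⟧) (hF : ∀ i ∈ t, ∀ n, ‖coeff n (F i)‖ * s ^ n ≤ 1) (n : ℕ) :
    ‖coeff n (∏ i ∈ t, F i)‖ * s ^ n ≤ 1 := by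
  refine Finset.prod_induction F (fun f => ∀ n, ‖coeff n f‖ * s ^ n ≤ 1)
    (fun f g hf hg => norm_coeff_mul_mul_pow_le_one hs hf hg) (fun n => ?_) hF n
  cases n <;> simp [coeff_one]

/-- Only the coefficients of `g` of positive degree enter the difference, each scaled by a
positive power of `c`. -/
lemma norm_coeff_mul_rescale_sub_mul_pow_le {c : K} (hc : ‖c‖ ≤ 1) {s : ℝ} (hs : 0 ≤ s)
    {f g : K⟦X⟧} (hf : ∀ n, ‖coeff n f‖ * s ^ n ≤ 1) (hg : ∀ n, ‖coeff n g‖ * s ^ n ≤ 1)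
    (hg0 : coeff 0 g = 1) (n : ℕ) :
    ‖coeff n (f * rescale c g) - coeff n f‖ * s ^ n ≤ ‖c‖ := by
  rw [coeff_mul, Finset.Nat.sum_antidiagonal_eq_sum_range_succ_mk, Finset.sum_range_succ]
  simp only [coeff_rescale, Nat.sub_self, pow_zero, hg0, mul_one, add_sub_cancel_right]
  rcases n.eq_zero_or_pos with rfl | hn
  · simp
  obtain ⟨k, hk_mem, hle⟩ := IsUltrametricDist.exists_norm_finsetSum_le_of_nonempty
    (Finset.nonempty_range_iff.mpr hn.ne') fun k => coeff k f * (c ^ (n - k) * coeff (n - k) g)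
  have hk : k < n := Finset.mem_range.mp hk_mem
  calc _ ≤ ‖coeff k f * (c ^ (n - k) * coeff (n - k) g)‖ * s ^ n := by gcongr
    _ = (‖coeff k f‖ * s ^ k) * (‖c‖ ^ (n - k) * (‖coeff (n - k) g‖ * s ^ (n - k))) := by
        rw [norm_mul, norm_mul, norm_pow, ← Nat.add_sub_cancel' hk.le, pow_add,
          Nat.add_sub_cancel_left]
        ring
    _ ≤ 1 * (‖c‖ * 1) := by
        gcongr
        · exact hf k
        · exact pow_le_of_le_one (norm_nonneg c) hc (Nat.sub_ne_zero_of_lt hk)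
        · exact hg _
    _ = ‖c‖ := by ring

end Ultrametric

section DeltaInvGrowth

variable {K : Type*} [NormedField K] [IsUltrametricDist K] {q : K} (Γ : K⟦X⟧)

lemma norm_coeff_deltaInv_succ_mul_pow_le (hq : ‖q‖ < 1) {ρ C : ℝ} (hρ : 0 ≤ ρ) (n : ℕ)
    (h : ∀ k < n + 1, ‖coeff (n + 1 - k) Γ‖ * ρ ^ (n + 1 - k) *
      (‖coeff k (deltaInv q Γ)‖ * (‖q‖ * ρ) ^ k) ≤ C) :
    ‖coeff (n + 1) (deltaInv q Γ)‖ * ρ ^ (n + 1) ≤ C := by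
  obtain ⟨k, hk_mem, hle⟩ := IsUltrametricDist.exists_norm_finsetSum_le_of_nonempty
    (Finset.nonempty_range_add_one (n := n))
    fun k => coeff (n + 1 - k) Γ * q ^ k * coeff k (deltaInv q Γ)
  have hk : k < n + 1 := Finset.mem_range.mp hk_mem
  rw [coeff_deltaInv_succ, norm_mul, norm_inv, norm_one_sub_eq_one (norm_pow_succ_lt_one hq n),
    inv_one, one_mul]
  calc _ ≤ ‖coeff (n + 1 - k) Γ * q ^ k * coeff k (deltaInv q Γ)‖ * ρ ^ (n + 1) := by gcongr
    _ = ‖coeff (n + 1 - k) Γ‖ * ρ ^ (n + 1 - k) *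
          (‖coeff k (deltaInv q Γ)‖ * (‖q‖ * ρ) ^ k) := by
        rw [norm_mul, norm_mul, norm_pow, ← Nat.sub_add_cancel hk.le, pow_add,
          Nat.add_sub_cancel, mul_pow]
        ring
    _ ≤ C := h k hk

lemma norm_coeff_deltaInv_mul_pow_le_one (hq : ‖q‖ < 1) {s : ℝ} (hs : 0 ≤ s)
    (hΓs : ∀ n, ‖coeff n Γ‖ * s ^ n ≤ 1) (n : ℕ) :
    ‖coeff n (deltaInv q Γ)‖ * s ^ n ≤ 1 := by
  induction n using Nat.strong_induction_on with
  | _ n ih =>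
    cases n with
    | zero => simp
    | succ n =>
      refine norm_coeff_deltaInv_succ_mul_pow_le Γ hq hs n fun k hk => ?_
      have hsk : ‖coeff k (deltaInv q Γ)‖ * (‖q‖ * s) ^ k ≤ 1 := by
        refine le_trans ?_ (ih k hk)
        rw [mul_pow]
        gcongr
        exact mul_le_of_le_one_left (by positivity) (pow_le_one₀ (norm_nonneg q) hq.le)
      exact mul_le_one₀ (hΓs _) (by positivity) hsk

lemma bddAbove_norm_coeff_deltaInv_mul_pow (hq : ‖q‖ < 1) {ρ : ℝ} (hρ : 0 ≤ ρ)
    (hΓ : BddAbove (Set.range fun n => ‖coeff n Γ‖ * ρ ^ n))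
    (hΔ : BddAbove (Set.range fun n => ‖coeff n (deltaInv q Γ)‖ * (‖q‖ * ρ) ^ n)) :
    BddAbove (Set.range fun n => ‖coeff n (deltaInv q Γ)‖ * ρ ^ n) := by
  obtain ⟨A, hA⟩ := hΓ
  obtain ⟨C, hC⟩ := hΔ
  rw [mem_upperBounds, Set.forall_mem_range] at hA hC
  have hA0 : 0 ≤ A := le_trans (by positivity) (hA 0)
  refine ⟨max 1 (A * C), Set.forall_mem_range.mpr fun n => ?_⟩
  cases n with
  | zero => simp
  | succ n =>
    refine norm_coeff_deltaInv_succ_mul_pow_le Γ hq hρ n fun k _ => ?_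
    exact le_max_of_le_right (mul_le_mul (hA _) (hC k) (by positivity) hA0)

theorem isEntirePowerSeries_deltaInv (hq : ‖q‖ < 1) (hΓ : IsEntirePowerSeries Γ) {s : ℝ}
    (hs : 0 < s) (hΓs : ∀ n, ‖coeff n Γ‖ * s ^ n ≤ 1) : IsEntirePowerSeries (deltaInv q Γ) := by
  have hbase : BddAbove (Set.range fun n => ‖coeff n (deltaInv q Γ)‖ * s ^ n) :=
    ⟨1, Set.forall_mem_range.mpr (norm_coeff_deltaInv_mul_pow_le_one Γ hq hs.le hΓs)⟩
  have hiter : ∀ j : ℕ, ∀ ρ, 0 ≤ ρ → ‖q‖ ^ j * ρ ≤ s →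
      BddAbove (Set.range fun n => ‖coeff n (deltaInv q Γ)‖ * ρ ^ n) := by
    intro j
    induction j with
    | zero =>
      exact fun ρ hρ hρs => bddAbove_norm_coeff_mul_pow_of_le hbase hρ (by simpa using hρs)
    | succ j ih =>
      intro ρ hρ hρs
      refine bddAbove_norm_coeff_deltaInv_mul_pow Γ hq hρ (hΓ.bddAbove hρ) ?_
      exact ih _ (by positivity) (by rwa [pow_succ, mul_assoc] at hρs)
  refine isEntirePowerSeries_of_bddAbove fun r hr => ?_
  obtain ⟨j, hj⟩ := exists_pow_lt_of_lt_one (div_pos hs hr) hq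
  exact hiter j r hr.le ((lt_div_iff₀ hr).mp hj).le

end DeltaInvGrowth

theorem tendsto_coeff_prod_rescale_pow {K : Type*} [NormedField K] [IsUltrametricDist K]
    {q : K} (hq : ‖q‖ < 1) {Γ Δ : K⟦X⟧} (hΔ : Δ = Γ * rescale q Δ) (hΔ0 : coeff 0 Δ = 1)
    {s : ℝ} (hs : 0 < s) (hΓs : ∀ n, ‖coeff n Γ‖ * s ^ n ≤ 1)
    (hΔs : ∀ n, ‖coeff n Δ‖ * s ^ n ≤ 1) (n : ℕ) :
    Tendsto (fun N => coeff n (∏ i ∈ Finset.range N, rescale (q ^ i) Γ)) atTop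
      (nhds (coeff n Δ)) := by
  have hqN (N : ℕ) : ‖q ^ N‖ ≤ 1 := by
    rw [norm_pow]; exact pow_le_one₀ (norm_nonneg q) hq.le
  have hdist (N : ℕ) :
      ‖coeff n (∏ i ∈ Finset.range N, rescale (q ^ i) Γ) - coeff n Δ‖ ≤ ‖q‖ ^ N / s ^ n := by
    have hP := norm_coeff_prod_mul_pow_le_one hs.le (Finset.range N) _ fun i _ m =>
      (mul_le_mul_of_nonneg_right (norm_coeff_rescale_le (hqN i) Γ m) (by positivity)).trans
        (hΓs m)
    rw [norm_sub_rev, le_div_iff₀ (by positivity), ← norm_pow,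
      eq_prod_rescale_mul_rescale_pow hΔ N]
    exact norm_coeff_mul_rescale_sub_mul_pow_le (hqN N) hs.le hP hΔs hΔ0 n
  rw [tendsto_iff_norm_sub_tendsto_zero]
  refine squeeze_zero (fun _ => norm_nonneg _) hdist ?_
  simpa using (tendsto_pow_atTop_nhds_zero_of_lt_one (norm_nonneg q) hq).div_const (s ^ n)

theorem stmt5_general (K : Type*) [NontriviallyNormedField K]
    [IsUltrametricDist K]
    (q : K) (hq1 : ‖q‖ < 1)
    (Γ : PowerSeries K) (hΓ0 : PowerSeries.coeff 0 Γ = 1)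
    (hΓent : IsEntirePowerSeries Γ) :
    ∃ Δ : PowerSeries K,
      (∀ n : ℕ,
        Tendsto
          (fun N : ℕ => PowerSeries.coeff n
            (∏ i ∈ Finset.range N, PowerSeries.rescale (q ^ i) Γ))
          atTop (nhds (PowerSeries.coeff n Δ))) ∧
      PowerSeries.coeff 0 Δ = 1 ∧
      IsEntirePowerSeries Δ ∧
      Δ = Γ * PowerSeries.rescale q Δ := by
  obtain ⟨s, hs, hΓs⟩ := exists_pos_forall_norm_coeff_mul_pow_le_one hΓent (by simp [hΓ0])
  have hΔ := deltaInv_eq_mul_rescale q Γ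
    (fun n h => by simpa [h] using norm_pow_succ_lt_one hq1 n) hΓ0
  exact ⟨deltaInv q Γ,
    tendsto_coeff_prod_rescale_pow hq1 hΔ (coeff_deltaInv_zero q Γ) hs hΓs
      (norm_coeff_deltaInv_mul_pow_le_one Γ hq1 hs.le hΓs),
    coeff_deltaInv_zero q Γ, isEntirePowerSeries_deltaInv Γ hq1 hΓent hs hΓs, hΔ⟩

/-- For an entire `Γ` with constant term `1` over a complete nonarchimedean field and
`0 < ‖q‖ < 1`: the coefficients of the partial products `∏_{i<N} Γ(q^i t)` converge,
defining an entire power series `Δ = δ⁻¹(Γ)` with constant term `1`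
satisfying `Δ(t) = Γ(t)·Δ(qt)`.  Here `Γ(q^i t)` is `PowerSeries.rescale (q^i) Γ`. -/
theorem stmt5 (K : Type*) [NontriviallyNormedField K] [CompleteSpace K]
    [IsUltrametricDist K]
    (q : K) (hq0 : 0 < ‖q‖) (hq1 : ‖q‖ < 1)
    (Γ : PowerSeries K) (hΓ0 : PowerSeries.coeff 0 Γ = 1)
    (hΓent : IsEntirePowerSeries Γ) :
    ∃ Δ : PowerSeries K,
      (∀ n : ℕ,
        Tendsto
          (fun N : ℕ => PowerSeries.coeff n
            (∏ i ∈ Finset.range N, PowerSeries.rescale (q ^ i) Γ))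
          atTop (nhds (PowerSeries.coeff n Δ))) ∧
      PowerSeries.coeff 0 Δ = 1 ∧
      IsEntirePowerSeries Δ ∧
      Δ = Γ * PowerSeries.rescale q Δ :=
  stmt5_general K q hq1 Γ hΓ0 hΓent
end

section
/- Let K be a field complete with respect to a nonarchimedean absolute value ‖·‖, let q ∈ K satisfy 0 < ‖q‖ < 1, let Γ(t) = 1 + Σ_{n≥1} a_n t^n be an entire power series over K, and let Δ = δ^{−1}(Γ) be the entire power series whose coefficients are the limits of the coefficients of the partial products ∏_{i=0}^{N−1} Γ(q^i t). Then for every x₀ ∈ K: the value Δ(x₀) (given by the convergent sum Σ b_n x₀^n) equals 0 if and only if Γ(q^i x₀) = 0 for some integer i ≥ 0. In particular, every zero of δ^{−1}(Γ) is of the form q^{−i}·λ for a zero λ of Γ. -/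
open Filter PowerSeries

/-!
Passing to the limit coefficientwise in `∏_{i ≤ N} Γ(q^i t) = Γ(t) · ∏_{i < N} Γ(q^{i+1} t)`
gives the functional equation `Δ(t) = Γ(t) Δ(qt)`. Read at `t^n` it says
`(1 - q^n) b_n = ∑_{k ≥ 1} a_k q^{n-k} b_{n-k}`; as `‖1 - q^n‖ = 1`, the ultrametric inequality
bounds `‖b_n‖ r^n` by the largest `(‖a_k‖ r^k ‖q‖^{n-k}) · ‖b_{n-k}‖ r^{n-k}`, and since
`‖a_k‖ r^k ‖q‖^{n-k}` is uniformly small for large `n`, `Δ` is entire. Iterating the functional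
equation on values, `Δ(x₀) = ∏_{i<N} Γ(q^i x₀) · Δ(q^N x₀)` with `Δ(q^N x₀) → Δ(0) = 1`, so
`Δ(x₀)` vanishes exactly when one of the factors `Γ(q^i x₀)` does.
-/

open Topology Finset

lemma eventually_forall_add_eq_mul_pow_lt {u : ℕ → ℝ} (hu0 : ∀ n, 0 ≤ u n)
    (hu : Tendsto u atTop (𝓝 0)) {s : ℝ} (hs0 : 0 ≤ s) (hs1 : s < 1) {ε : ℝ} (hε : 0 < ε) :
    ∀ᶠ n in atTop, ∀ k l, k + l = n → u k * s ^ l < ε := by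
  obtain ⟨B, hB⟩ := hu.bddAbove_range
  have hBs : Tendsto (fun l => B * s ^ l) atTop (𝓝 0) := by
    simpa using (tendsto_pow_atTop_nhds_zero_of_lt_one hs0 hs1).const_mul B
  obtain ⟨T, hT⟩ := eventually_atTop.1 (hu.eventually (gt_mem_nhds hε))
  obtain ⟨L, hL⟩ := eventually_atTop.1 (hBs.eventually (gt_mem_nhds hε))
  filter_upwards [eventually_ge_atTop (T + L)] with n hn k l hkl
  rcases le_or_gt T k with hk | hk
  · calc u k * s ^ l ≤ u k := mul_le_of_le_one_right (hu0 k) (pow_le_one₀ hs0 hs1.le)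
      _ < ε := hT k hk
  · calc u k * s ^ l ≤ B * s ^ l :=
          mul_le_mul_of_nonneg_right (hB ⟨k, rfl⟩) (pow_nonneg hs0 l)
      _ < ε := hL l (by omega)

lemma tendsto_zero_of_eventually_le_mul_bound {β : ℕ → ℝ} (hβ0 : ∀ n, 0 ≤ β n)
    (h : ∀ ε > 0, ∀ᶠ n in atTop, ∀ C, (∀ l < n, β l ≤ C) → β n ≤ ε * C) :
    Tendsto β atTop (𝓝 0) := by
  obtain ⟨n₀, hn₀⟩ := eventually_atTop.1 (h 1 one_pos)
  set M := ∑ l ∈ range n₀, β l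
  have hM : ∀ n, β n ≤ M := by
    intro n
    induction n using Nat.strong_induction_on with
    | _ n ih =>
      rcases lt_or_ge n n₀ with hn | hn
      · exact single_le_sum (fun l _ => hβ0 l) (mem_range.2 hn)
      · simpa using hn₀ n hn M ih
  have hM0 : 0 ≤ M := (hβ0 0).trans (hM 0)
  refine tendsto_order.2 ⟨fun a ha => Eventually.of_forall fun n => ha.trans_le (hβ0 n),
    fun a ha => ?_⟩
  filter_upwards [h (a / (M + 1)) (by positivity)] with n hn
  calc β n ≤ a / (M + 1) * M := hn M fun l _ => hM l
    _ < a := by rw [div_mul_eq_mul_div, div_lt_iff₀ (by positivity)]; nlinarith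

lemma eq_prod_mul_of_forall_eq_mul {K M : Type*} [Monoid K] [CommMonoid M] {F G : K → M}
    (q : K) (h : ∀ y, F y = G y * F (q * y)) (x : K) (N : ℕ) :
    F x = (∏ i ∈ range N, G (q ^ i * x)) * F (q ^ N * x) := by
  induction N with
  | zero => simp
  | succ N ih => rw [ih, h (q ^ N * x), prod_range_succ, pow_succ', mul_assoc q, mul_assoc]

namespace PowerSeries

section Products

variable {R : Type*} [CommRing R] (q : R) (Γ : R⟦X⟧)

lemma prod_range_succ_rescale_pow (N : ℕ) :
    ∏ i ∈ range (N + 1), rescale (q ^ i) Γ =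
      Γ * rescale q (∏ i ∈ range N, rescale (q ^ i) Γ) := by
  simp only [prod_range_succ', map_prod, rescale_rescale, ← pow_succ, pow_zero, rescale_one,
    RingHom.id_apply]
  exact mul_comm _ _

lemma coeff_zero_prod_rescale_pow {Γ : R⟦X⟧} (hΓ0 : coeff 0 Γ = 1) (N : ℕ) :
    coeff 0 (∏ i ∈ range N, rescale (q ^ i) Γ) = 1 := by
  simp [map_prod, ← coeff_zero_eq_constantCoeff_apply, coeff_rescale, hΓ0]

variable {q Γ} {Δ : R⟦X⟧} [TopologicalSpace R] [T2Space R]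

lemma eq_mul_rescale_of_tendsto_coeff_prod [IsTopologicalRing R]
    (hΔ : ∀ n, Tendsto (fun N => coeff n (∏ i ∈ range N, rescale (q ^ i) Γ)) atTop
      (𝓝 (coeff n Δ))) :
    Δ = Γ * rescale q Δ := by
  ext n
  have hmul : Tendsto (fun N => coeff n (Γ * rescale q (∏ i ∈ range N, rescale (q ^ i) Γ)))
      atTop (𝓝 (coeff n (Γ * rescale q Δ))) := by
    simp only [coeff_mul, coeff_rescale]
    exact tendsto_finsetSum _ fun kl _ => ((hΔ kl.2).const_mul _).const_mul _
  refine tendsto_nhds_unique ((hΔ n).comp (tendsto_add_atTop_nat 1)) ?_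
  simpa only [Function.comp_def, prod_range_succ_rescale_pow] using hmul

lemma coeff_zero_eq_one_of_tendsto_coeff_prod (hΓ0 : coeff 0 Γ = 1)
    (hΔ0 : Tendsto (fun N => coeff 0 (∏ i ∈ range N, rescale (q ^ i) Γ)) atTop
      (𝓝 (coeff 0 Δ))) :
    coeff 0 Δ = 1 :=
  tendsto_nhds_unique hΔ0 (by simp [coeff_zero_prod_rescale_pow q hΓ0])

end Products

section Values

variable {R : Type*} [CommSemiring R]

lemma coeff_rescale_mul_pow (f : R⟦X⟧) (c x : R) (n : ℕ) :
    coeff n (rescale c f) * x ^ n = coeff n f * (c * x) ^ n := by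
  rw [coeff_rescale, mul_pow]
  ring

variable [TopologicalSpace R]

noncomputable def tsumEval (f : R⟦X⟧) (x : R) : R := ∑' n, coeff n f * x ^ n

lemma tsumEval_rescale (f : R⟦X⟧) (c x : R) : tsumEval (rescale c f) x = tsumEval f (c * x) :=
  tsum_congr (coeff_rescale_mul_pow f c x)

end Values

lemma tsumEval_mul {R : Type*} [NormedCommRing R] [CompleteSpace R] {f g : R⟦X⟧} {x : R}
    (hf : Summable fun n => ‖coeff n f * x ^ n‖) (hg : Summable fun n => ‖coeff n g * x ^ n‖) :
    tsumEval (f * g) x = tsumEval f x * tsumEval g x := by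
  rw [tsumEval, tsumEval, tsumEval, tsum_mul_tsum_eq_tsum_sum_antidiagonal_of_summable_norm hf hg]
  refine tsum_congr fun n => ?_
  rw [coeff_mul, sum_mul]
  refine sum_congr rfl fun kl hkl => ?_
  rw [← mem_antidiagonal.1 hkl, pow_add]
  ring

end PowerSeries

namespace IsEntirePowerSeries

variable {K : Type*} [NormedField K] {f : K⟦X⟧}

lemma summable_norm (hf : IsEntirePowerSeries f) (x : K) :
    Summable fun n => ‖coeff n f * x ^ n‖ := by
  obtain ⟨B, hB⟩ := (hf (‖x‖ + 1) (by positivity)).bddAbove_range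
  have hratio : ‖x‖ / (‖x‖ + 1) < 1 := (div_lt_one (by positivity)).2 (lt_add_one _)
  refine .of_nonneg_of_le (fun n => norm_nonneg _) (fun n => ?_)
    ((summable_geometric_of_lt_one (by positivity) hratio).mul_left B)
  calc ‖coeff n f * x ^ n‖ = ‖coeff n f‖ * (‖x‖ + 1) ^ n * (‖x‖ / (‖x‖ + 1)) ^ n := by
        rw [norm_mul, norm_pow, div_pow, mul_assoc, mul_div_cancel₀ _ (by positivity)]
    _ ≤ B * (‖x‖ / (‖x‖ + 1)) ^ n :=
        mul_le_mul_of_nonneg_right (hB ⟨n, rfl⟩) (by positivity)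

lemma tendsto_tsumEval_zero [CompleteSpace K] (hf : IsEntirePowerSeries f) :
    Tendsto (tsumEval f) (𝓝 0) (𝓝 (coeff 0 f)) := by
  obtain ⟨B, hB⟩ := (hf 1 one_pos).bddAbove_range
  have hB : ∀ n, ‖coeff n f‖ ≤ B := fun n => by simpa using hB ⟨n, rfl⟩
  have hbound : ∀ y : K, ‖y‖ ≤ 2⁻¹ → ‖tsumEval f y - coeff 0 f‖ ≤ 2 * B * ‖y‖ := by
    intro y hy
    have hs := hf.summable_norm y
    have hterm : ∀ n, ‖coeff (n + 1) f * y ^ (n + 1)‖ ≤ B * ‖y‖ * 2⁻¹ ^ n := fun n => by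
      rw [norm_mul, norm_pow, pow_succ, ← mul_assoc, mul_right_comm B]
      have hB0 : 0 ≤ B := (norm_nonneg _).trans (hB 0)
      gcongr
      exact hB _
    have hs1 : Summable fun n => ‖coeff (n + 1) f * y ^ (n + 1)‖ :=
      (summable_nat_add_iff (f := fun n => ‖coeff n f * y ^ n‖) 1).2 hs
    rw [tsumEval, hs.of_norm.tsum_eq_zero_add, pow_zero, mul_one, add_sub_cancel_left]
    calc ‖∑' n, coeff (n + 1) f * y ^ (n + 1)‖ ≤ ∑' n, ‖coeff (n + 1) f * y ^ (n + 1)‖ :=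
          norm_tsum_le_tsum_norm hs1
      _ ≤ ∑' n, B * ‖y‖ * 2⁻¹ ^ n :=
          hs1.tsum_le_tsum hterm
            ((summable_geometric_of_lt_one (by norm_num) (by norm_num)).mul_left _)
      _ = 2 * B * ‖y‖ := by rw [tsum_mul_left, tsum_geometric_inv_two]; ring
  rw [← tendsto_sub_nhds_zero_iff]
  refine squeeze_zero_norm' ?_ (by simpa using (tendsto_norm_zero (E := K)).const_mul (2 * B))
  filter_upwards [Metric.closedBall_mem_nhds (0 : K) (by norm_num : (0 : ℝ) < 2⁻¹)] with y hy
  exact hbound y (by simpa using hy)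

end IsEntirePowerSeries

lemma PowerSeries.norm_coeff_mul_pow_le_of_eq_mul_rescale {K : Type*} [NormedField K]
    [IsUltrametricDist K] {q : K} (hq1 : ‖q‖ < 1) {Γ Δ : K⟦X⟧} (hΓ0 : coeff 0 Γ = 1)
    (hfe : Δ = Γ * rescale q Δ)
    {r : ℝ} (hr : 0 < r) {n : ℕ} (hn : 0 < n) {C : ℝ} (hC : 0 ≤ C)
    (h : ∀ k l, k + l = n → 0 < k → ‖coeff k Γ‖ * r ^ k * ‖q‖ ^ l * (‖coeff l Δ‖ * r ^ l) ≤ C) :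
    ‖coeff n Δ‖ * r ^ n ≤ C := by
  -- the `k = 0` term of `coeff n (Γ * rescale q Δ)` is `q ^ n * coeff n Δ`
  have hsplit : coeff n Δ * (1 - q ^ n) =
      ∑ k ∈ range n, coeff (k + 1) Γ * (q ^ (n - (k + 1)) * coeff (n - (k + 1)) Δ) := by
    have hcoeff := congrArg (coeff n) hfe
    rw [coeff_mul, Nat.sum_antidiagonal_eq_sum_range_succ
      (fun k l => coeff k Γ * coeff l (rescale q Δ)), sum_range_succ'] at hcoeff
    simp only [coeff_rescale, hΓ0, Nat.sub_zero, one_mul] at hcoeff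
    linear_combination hcoeff
  have hunit : ‖(1 : K) - q ^ n‖ = 1 := by
    have hlt : ‖-q ^ n‖ < ‖(1 : K)‖ := by
      rw [norm_neg, norm_pow, norm_one]
      exact pow_lt_one₀ (norm_nonneg q) hq1 hn.ne'
    rw [sub_eq_add_neg, IsUltrametricDist.norm_add_eq_max_of_norm_ne_norm hlt.ne',
      max_eq_left hlt.le, norm_one]
  rw [← le_div_iff₀ (pow_pos hr n), ← mul_one ‖coeff n Δ‖, ← hunit, ← norm_mul, hsplit]
  refine IsUltrametricDist.norm_sum_le_of_forall_le_of_nonneg (by positivity) fun k hk => ?_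
  have hkl : k + 1 + (n - (k + 1)) = n := by have := mem_range.1 hk; omega
  rw [le_div_iff₀ (pow_pos hr n)]
  calc _ = ‖coeff (k + 1) Γ‖ * r ^ (k + 1) * ‖q‖ ^ (n - (k + 1)) *
        (‖coeff (n - (k + 1)) Δ‖ * r ^ (n - (k + 1))) := by
        have hr_pow : r ^ n = r ^ (k + 1) * r ^ (n - (k + 1)) := by rw [← pow_add, hkl]
        rw [hr_pow]
        simp only [norm_mul, norm_pow]
        ring
    _ ≤ C := h _ _ hkl k.succ_pos

theorem IsEntirePowerSeries.of_eq_mul_rescale {K : Type*} [NormedField K] [IsUltrametricDist K]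
    {q : K} (hq1 : ‖q‖ < 1) {Γ Δ : K⟦X⟧} (hΓ0 : coeff 0 Γ = 1) (hΓ : IsEntirePowerSeries Γ)
    (hfe : Δ = Γ * rescale q Δ) : IsEntirePowerSeries Δ := by
  intro r hr
  refine tendsto_zero_of_eventually_le_mul_bound (fun n => by positivity) fun ε hε => ?_
  filter_upwards [eventually_forall_add_eq_mul_pow_lt (fun k => by positivity) (hΓ r hr)
    (norm_nonneg q) hq1 hε, eventually_gt_atTop 0] with n hsmall hn C hC
  have hC0 : 0 ≤ C := (by positivity : (0 : ℝ) ≤ ‖coeff 0 Δ‖ * r ^ 0).trans (hC 0 hn)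
  refine norm_coeff_mul_pow_le_of_eq_mul_rescale hq1 hΓ0 hfe hr hn (by positivity)
    fun k l hkl hk => ?_
  exact mul_le_mul (hsmall k l hkl).le (hC l (by omega)) (by positivity) hε.le

theorem stmt6_general (K : Type*) [NontriviallyNormedField K] [CompleteSpace K]
    [IsUltrametricDist K]
    (q : K) (hq1 : ‖q‖ < 1)
    (Γ : PowerSeries K) (hΓ0 : PowerSeries.coeff 0 Γ = 1)
    (hΓent : IsEntirePowerSeries Γ)
    (Δ : PowerSeries K)
    (hΔ : ∀ n : ℕ,
      Tendsto
        (fun N : ℕ => PowerSeries.coeff n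
          (∏ i ∈ Finset.range N, PowerSeries.rescale (q ^ i) Γ))
        atTop (nhds (PowerSeries.coeff n Δ)))
    (x₀ : K) :
    (∑' n : ℕ, PowerSeries.coeff n Δ * x₀ ^ n) = 0 ↔
      ∃ i : ℕ, (∑' n : ℕ, PowerSeries.coeff n Γ * (q ^ i * x₀) ^ n) = 0 := by
  have hfe : Δ = Γ * rescale q Δ := eq_mul_rescale_of_tendsto_coeff_prod hΔ
  have hΔent : IsEntirePowerSeries Δ := IsEntirePowerSeries.of_eq_mul_rescale hq1 hΓ0 hΓent hfe
  have hval : ∀ y, tsumEval Δ y = tsumEval Γ y * tsumEval Δ (q * y) := fun y => by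
    have hres : Summable fun n => ‖coeff n (rescale q Δ) * y ^ n‖ := by
      simpa only [coeff_rescale_mul_pow] using hΔent.summable_norm (q * y)
    conv_lhs => rw [hfe]
    rw [tsumEval_mul (hΓent.summable_norm y) hres, tsumEval_rescale]
  have htend : Tendsto (fun N => tsumEval Δ (q ^ N * x₀)) atTop (𝓝 1) := by
    rw [← coeff_zero_eq_one_of_tendsto_coeff_prod hΓ0 (hΔ 0)]
    refine hΔent.tendsto_tsumEval_zero.comp ?_
    simpa using (tendsto_pow_atTop_nhds_zero_of_norm_lt_one hq1).mul_const x₀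
  change tsumEval Δ x₀ = 0 ↔ ∃ i, tsumEval Γ (q ^ i * x₀) = 0
  constructor
  · intro hzero
    by_contra! hne
    obtain ⟨N, hN⟩ := (htend.eventually_ne one_ne_zero).exists
    rw [eq_prod_mul_of_forall_eq_mul q hval x₀ N] at hzero
    exact mul_ne_zero (prod_ne_zero_iff.2 fun i _ => hne i) hN hzero
  · rintro ⟨i, hi⟩
    rw [eq_prod_mul_of_forall_eq_mul q hval x₀ (i + 1),
      prod_eq_zero (mem_range.2 i.lt_succ_self) hi, zero_mul]

/-- The zeros of `Δ = δ⁻¹(Γ)` (whose coefficients are the limits of the coefficients of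
the partial products `∏_{i<N} Γ(q^i t)`): for `x₀ ∈ K`, `Δ(x₀) = 0` iff
`Γ(q^i x₀) = 0` for some `i ≥ 0`, values of entire series being given by `tsum`s. -/
theorem stmt6 (K : Type*) [NontriviallyNormedField K] [CompleteSpace K]
    [IsUltrametricDist K]
    (q : K) (hq0 : 0 < ‖q‖) (hq1 : ‖q‖ < 1)
    (Γ : PowerSeries K) (hΓ0 : PowerSeries.coeff 0 Γ = 1)
    (hΓent : IsEntirePowerSeries Γ)
    (Δ : PowerSeries K)
    (hΔ : ∀ n : ℕ,
      Tendsto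
        (fun N : ℕ => PowerSeries.coeff n
          (∏ i ∈ Finset.range N, PowerSeries.rescale (q ^ i) Γ))
        atTop (nhds (PowerSeries.coeff n Δ)))
    (x₀ : K) :
    (∑' n : ℕ, PowerSeries.coeff n Δ * x₀ ^ n) = 0 ↔
      ∃ i : ℕ, (∑' n : ℕ, PowerSeries.coeff n Γ * (q ^ i * x₀) ^ n) = 0 :=
  stmt6_general K q hq1 Γ hΓ0 hΓent Δ hΔ x₀
end

section
/- Let d_1 ≥ d_2 ≥ ⋯ ≥ d_r be positive integers and let c be an integer with 0 ≤ c ≤ r. Define d_i^* = d_i for 1 ≤ i ≤ c; d_i^* = 1 for i > c with d_i = d_1; and d_i^* = 0 for i > c with d_i < d_1. Then for every integer s with c ≤ s ≤ r and every subset S ⊆ {1,…,r} with |S| ≥ s, one has (as integers) Σ_{i∈S}(d_1 − d_i − 1) ≥ Σ_{i=1}^{s}(d_1 − d_i − 1) − Σ_{i=s+1}^{r} d_i^*. -/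
/-- The modified degrees `d_i^*`: `d_i^* = d_i` for `1 ≤ i ≤ c` (i.e. `i.val < c`),
`d_i^* = 1` for `i > c` with `d_i = d_1`, and `d_i^* = 0` for `i > c` with `d_i < d_1`.
Here `d ⟨0, hr⟩` is `d_1`. -/
def dstar (r c : ℕ) (hr : 0 < r) (d : Fin r → ℕ) (i : Fin r) : ℕ :=
  if (i : ℕ) < c then d i
  else if d i = d ⟨0, hr⟩ then 1 else 0

set_option maxRecDepth 4000 in
/-- For `c ≤ s ≤ r` and any `S ⊆ {1,…,r}` with `|S| ≥ s`:
`Σ_{i∈S}(d_1 − d_i − 1) ≥ Σ_{i=1}^{s}(d_1 − d_i − 1) − Σ_{i=s+1}^{r} d_i^*` (in `ℤ`).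
The range `1 ≤ i ≤ s` corresponds to `i.val < s`, and `s+1 ≤ i ≤ r` to `s ≤ i.val`. -/
theorem stmt8 (r c : ℕ) (hr : 0 < r) (hc : c ≤ r)
    (d : Fin r → ℕ) (hpos : ∀ i, 1 ≤ d i)
    (hmono : ∀ i j : Fin r, i ≤ j → d j ≤ d i)
    (s : ℕ) (hcs : c ≤ s) (hsr : s ≤ r)
    (S : Finset (Fin r)) (hS : s ≤ S.card) :
    (∑ i ∈ Finset.univ.filter (fun i : Fin r => (i : ℕ) < s),
        ((d ⟨0, hr⟩ : ℤ) - (d i : ℤ) - 1))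
      - ∑ i ∈ Finset.univ.filter (fun i : Fin r => s ≤ (i : ℕ)),
          ((dstar r c hr d i : ℤ))
    ≤ ∑ i ∈ S, ((d ⟨0, hr⟩ : ℤ) - (d i : ℤ) - 1) := by
  classical
  set F : Fin r → ℤ := fun i => (d ⟨0, hr⟩ : ℤ) - (d i : ℤ) - 1 with hF
  set T : Finset (Fin r) := Finset.univ.filter (fun i : Fin r => (i : ℕ) < s) with hT
  set U : Finset (Fin r) := Finset.univ.filter (fun i : Fin r => s ≤ (i : ℕ)) with hU
  have hdle : ∀ i : Fin r, d i ≤ d ⟨0, hr⟩ := fun i =>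
    hmono ⟨0, hr⟩ i (by simp [Fin.le_def])
  have hFmono : ∀ i j : Fin r, (i : ℕ) ≤ (j : ℕ) → F i ≤ F j := by
    intro i j h
    have h2 : (d j : ℤ) ≤ d i := by exact_mod_cast hmono i j h
    show (d ⟨0, hr⟩ : ℤ) - (d i : ℤ) - 1 ≤ (d ⟨0, hr⟩ : ℤ) - (d j : ℤ) - 1
    linarith
  have hneg : ∀ i : Fin r, c ≤ (i : ℕ) → -F i ≤ (dstar r c hr d i : ℤ) := by
    intro i hi
    have h1 := hdle i
    have h2 := hpos i
    show -((d ⟨0, hr⟩ : ℤ) - (d i : ℤ) - 1) ≤ (dstar r c hr d i : ℤ)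
    unfold dstar
    rw [if_neg (by omega)]
    by_cases h : d i = d ⟨0, hr⟩
    · rw [if_pos h]; omega
    · rw [if_neg h]; push_cast; omega
  set A : Finset (Fin r) := T \ S with hA
  set B : Finset (Fin r) := S \ T with hB
  have hTcard : T.card = s := by
    rw [hT, ← Finset.card_range s]
    apply Finset.card_bij (fun (i : Fin r) _ => (i : ℕ))
    · intro i hi
      simpa using (Finset.mem_filter.mp hi).2
    · intro i _ j _ h
      exact Fin.val_injective h
    · intro a ha
      have ha' : a < s := Finset.mem_range.mp ha
      exact ⟨⟨a, lt_of_lt_of_le ha' hsr⟩, by simp [ha'], rfl⟩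
  have hcardAB : A.card ≤ B.card := by
    have h1 : A.card + (T ∩ S).card = T.card := Finset.card_sdiff_add_card_inter T S
    have h2 : B.card + (S ∩ T).card = S.card := Finset.card_sdiff_add_card_inter S T
    rw [Finset.inter_comm] at h2
    omega
  obtain ⟨B', hB'sub, hB'card⟩ := Finset.exists_subset_card_eq hcardAB
  have hAlt : ∀ a ∈ A, (a : ℕ) < s := by
    intro a ha
    have := Finset.mem_sdiff.mp ha
    simpa [hT] using this.1
  have hBge : ∀ b ∈ B, s ≤ (b : ℕ) := by
    intro b hb
    have := Finset.mem_sdiff.mp hb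
    have := this.2
    simp [hT] at this
    omega
  have key : ∑ a ∈ A, F a ≤ ∑ b ∈ B', F b := by
    have e : {x // x ∈ A} ≃ {x // x ∈ B'} := Finset.equivOfCardEq hB'card.symm
    calc ∑ a ∈ A, F a = ∑ a : {x // x ∈ A}, F a := (Finset.sum_coe_sort A F).symm
      _ ≤ ∑ a : {x // x ∈ A}, F (e a) := by
          apply Finset.sum_le_sum
          intro a _
          apply hFmono
          have h1 := hAlt a a.2
          have h2 := hBge (e a) (hB'sub (e a).2)
          omega
      _ = ∑ b : {x // x ∈ B'}, F b := Equiv.sum_comp e (fun b => F (b : Fin r))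
      _ = ∑ b ∈ B', F b := Finset.sum_coe_sort B' F
  have hsplitS : ∑ i ∈ S ∩ T, F i + ∑ i ∈ B, F i = ∑ i ∈ S, F i :=
    Finset.sum_inter_add_sum_sdiff S T F
  have hsplitT : ∑ i ∈ T ∩ S, F i + ∑ i ∈ A, F i = ∑ i ∈ T, F i :=
    Finset.sum_inter_add_sum_sdiff T S F
  have hsdiff : ∑ i ∈ B \ B', F i + ∑ i ∈ B', F i = ∑ i ∈ B, F i :=
    Finset.sum_sdiff hB'sub
  have hrest : -∑ i ∈ B \ B', F i ≤ ∑ i ∈ U, (dstar r c hr d i : ℤ) := by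
    rw [← Finset.sum_neg_distrib]
    apply le_trans (Finset.sum_le_sum (fun i hi => hneg i ?_))
    · apply Finset.sum_le_sum_of_subset_of_nonneg
      · intro b hb
        have hb' := Finset.mem_sdiff.mp hb
        have := hBge b hb'.1
        simp [hU, this]
      · intro i _ _; positivity
    · have := hBge i (Finset.mem_sdiff.mp hi).1
      omega
  rw [Finset.inter_comm] at hsplitT
  linarith [key]
end
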